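/- Let F be a field, T a regular n×n upper triangular matrix polynomial over F, and s_1, …, s_n monic polynomials in F[λ] with s_i dividing s_{i+1} for 1 ≤ i < n, such that T is unimodularly equivalent to diag(s_1, …, s_n). Let 𝒮 be any set of monic irreducible polynomials in F[λ], and for a nonzero p ∈ F[λ] let c_𝒮(p) denote the number of irreducible factors of p, counted with multiplicity, whose normalized (monic) form lies in 𝒮. Then the vector (c_𝒮(s_1), …, c_𝒮(s_n)) majorizes the vector (c_𝒮(T_{11}), …, c_𝒮(T_{nn})). -/

import Mathlib

/-!
Write `T = A * diag(s) * B`. For an index set `J` of size `m`, the principal minor of `T` on `J`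
is `∏_{j ∈ J} T j j` since `T` is upper triangular, while the Cauchy–Binet expansion shows that
every `m × m` minor of `A * diag(s) * B` is divisible by `s 0 * ⋯ * s (m - 1)`, because `s` is a
divisibility chain. Hence the sum of the `m` smallest counts `c(s i)` is at most the sum of the
counts of any `m` diagonal entries of `T`. Since `det T` and `∏ i, s i` are associated, the totals
agree, and passing to complements turns these bounds into majorization.
-/

open Polynomial

/-- Unimodular equivalence of square matrix polynomials. -/
def UnimodEquiv {F : Type*} [Field F] {n : ℕ}
    (P Q : Matrix (Fin n) (Fin n) F[X]) : Prop :=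
  ∃ U V : Matrix (Fin n) (Fin n) F[X], IsUnit U.det ∧ IsUnit V.det ∧ Q = U * P * V

/-- `x` majorizes `y`: after rearranging each vector in decreasing order, every
partial sum of `x` dominates the corresponding partial sum of `y`, with equal totals. -/
def MajorizesInt {n : ℕ} (x y : Fin n → ℤ) : Prop :=
  ∃ σ τ : Equiv.Perm (Fin n),
    (∀ i j : Fin n, i ≤ j → x (σ j) ≤ x (σ i)) ∧
    (∀ i j : Fin n, i ≤ j → y (τ j) ≤ y (τ i)) ∧
    (∀ ℓ : ℕ,
      ∑ i ∈ Finset.univ.filter (fun i : Fin n => (i : ℕ) < ℓ), y (τ i)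
        ≤ ∑ i ∈ Finset.univ.filter (fun i : Fin n => (i : ℕ) < ℓ), x (σ i)) ∧
    (∑ i, x i = ∑ i, y i)

/-- `c_𝒮(p)`: the number of irreducible factors of `p`, counted with multiplicity,
whose normalized (monic) form lies in `S`. -/
noncomputable def countIn {F : Type*} [Field F] (S : Set F[X]) (p : F[X]) : ℕ :=
  letI := Classical.decEq F
  letI := Classical.decPred fun q : F[X] => q ∈ S
  Multiset.countP (fun q => q ∈ S) (UniqueFactorizationMonoid.normalizedFactors p)

open UniqueFactorizationMonoid Matrix Finset

section countIn

variable {F : Type*} [Field F] (S : Set F[X])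

theorem countIn_mul {p q : F[X]} (hp : p ≠ 0) (hq : q ≠ 0) :
    countIn S (p * q) = countIn S p + countIn S q := by
  let := Classical.decEq F
  let := Classical.decPred fun q : F[X] => q ∈ S
  simp only [countIn, normalizedFactors_mul hp hq, Multiset.countP_add]

theorem countIn_prod {ι : Type*} (t : Finset ι) {p : ι → F[X]} (hp : ∀ i ∈ t, p i ≠ 0) :
    countIn S (∏ i ∈ t, p i) = ∑ i ∈ t, countIn S (p i) := by
  classical
  induction t using Finset.induction_on with
  | empty => simp [countIn]
  | insert a t ha ih =>
    rw [prod_insert ha, sum_insert ha,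
      countIn_mul S (hp a (mem_insert_self a t))
        (prod_ne_zero_iff.mpr fun i hi => hp i (mem_insert_of_mem hi)),
      ih fun i hi => hp i (mem_insert_of_mem hi)]

theorem countIn_le_of_dvd {p q : F[X]} (hq : q ≠ 0) (h : p ∣ q) :
    countIn S p ≤ countIn S q := by
  let := Classical.decEq F
  let := Classical.decPred fun q : F[X] => q ∈ S
  exact Multiset.countP_le_of_le _
    ((dvd_iff_normalizedFactors_le_normalizedFactors (ne_zero_of_dvd_ne_zero hq h) hq).mp h)

theorem Associated.countIn_eq {p q : F[X]} (h : Associated p q) :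
    countIn S p = countIn S q := by
  let := Classical.decEq F
  simp only [countIn, h.normalizedFactors_eq]

end countIn

section DvdChain

variable {M : Type*} [CommMonoid M] {n : ℕ} {s : Fin n → M}

theorem dvd_of_le_of_forall_dvd_succ
    (hs : ∀ (i : Fin n) (h : (i : ℕ) + 1 < n), s i ∣ s ⟨i + 1, h⟩) {j k : Fin n}
    (hjk : j ≤ k) : s j ∣ s k := by
  obtain ⟨k, hk⟩ := k
  change (j : ℕ) ≤ k at hjk
  revert hk
  induction k, hjk using Nat.le_induction with
  | base => exact fun _ => dvd_rfl
  | succ k hjk ih => exact fun hk => (ih (by omega)).trans (hs ⟨k, by omega⟩ hk)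

theorem prod_filter_lt_card_dvd_prod (hs : ∀ j k : Fin n, j ≤ k → s j ∣ s k)
    (J : Finset (Fin n)) :
    ∏ i ∈ univ.filter (fun i : Fin n => (i : ℕ) < #J), s i ∣ ∏ j ∈ J, s j := by
  induction J using Finset.induction_on_max with
  | empty => simp
  | insert a J hlt ih =>
    have ha : a ∉ J := fun h => lt_irrefl a (hlt a h)
    have hJa : #J ≤ a := by
      simpa using card_le_card fun x hx => mem_Iio.mpr (hlt x hx)
    have hfilter : univ.filter (fun i : Fin n => (i : ℕ) < #J + 1)
        = insert ⟨#J, by omega⟩ (univ.filter fun i : Fin n => (i : ℕ) < #J) := by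
      ext i
      simp only [Order.lt_add_one_iff, mem_filter, mem_univ, true_and, mem_insert, Fin.ext_iff]
      omega
    rw [card_insert_of_notMem ha, hfilter, prod_insert (by simp), prod_insert ha]
    exact mul_dvd_mul (hs _ _ hJa) ih

end DvdChain

namespace Matrix

variable {R : Type*} [CommRing R] {ι α β κ : Type*} [Fintype ι] [Fintype κ] [DecidableEq κ]

theorem det_submatrix_mul (A : Matrix α ι R) (B : Matrix ι β R) (f : κ → α) (g : κ → β) :
    ((A * B).submatrix f g).det
      = ∑ φ : κ → ι, (∏ k, A (f k) (φ k)) * (B.submatrix φ g).det := by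
  have hrows : (A * B).submatrix f g = fun k => ∑ j, A (f k) j • fun l => B j (g l) := by
    ext k l; simp [Matrix.mul_apply]
  change detRowAlternating _ = _
  rw [hrows]
  refine ((detRowAlternating : AlternatingMap R (κ → R) R κ).toMultilinearMap.map_sum
    (g := fun k j => A (f k) j • fun l => B j (g l))).trans (sum_congr rfl fun φ _ => ?_)
  exact (MultilinearMap.map_smul_univ _ _ _).trans (smul_eq_mul _ _)

theorem det_submatrix_diagonal_mul [DecidableEq ι] (s : ι → R) (B : Matrix ι β R) (φ : κ → ι)
    (g : κ → β) :
    ((diagonal s * B).submatrix φ g).det = (∏ k, s (φ k)) * (B.submatrix φ g).det := by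
  rw [show (diagonal s * B).submatrix φ g = diagonal (s ∘ φ) * B.submatrix φ g by
    ext; simp [diagonal_mul], det_mul, det_diagonal]
  rfl

theorem prod_filter_lt_dvd_det_submatrix {m n : ℕ} {s : Fin n → R}
    (hs : ∀ j k : Fin n, j ≤ k → s j ∣ s k) (A : Matrix α (Fin n) R) (B : Matrix (Fin n) β R)
    (f : Fin m → α) (g : Fin m → β) :
    ∏ i ∈ univ.filter (fun i : Fin n => (i : ℕ) < m), s i
      ∣ ((A * diagonal s * B).submatrix f g).det := by
  rw [Matrix.mul_assoc, det_submatrix_mul]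
  refine dvd_sum fun φ _ => dvd_mul_of_dvd_right ?_ _
  rw [det_submatrix_diagonal_mul]
  by_cases hφ : Function.Injective φ
  · refine dvd_mul_of_dvd_left ?_ _
    simpa using prod_filter_lt_card_dvd_prod hs (univ.map ⟨φ, hφ⟩)
  · obtain ⟨i, j, hij, hne⟩ : ∃ i j, φ i = φ j ∧ i ≠ j := by
      simpa [Function.Injective] using hφ
    rw [det_zero_of_row_eq hne (by ext; simp [hij]), mul_zero]
    exact dvd_zero _

theorem prod_filter_lt_card_dvd_prod_diag {n : ℕ} {s : Fin n → R}
    (hs : ∀ j k : Fin n, j ≤ k → s j ∣ s k) {T A B : Matrix (Fin n) (Fin n) R}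
    (hT : T.IsUpperTriangular) (hTs : T = A * diagonal s * B) (J : Finset (Fin n)) :
    ∏ i ∈ univ.filter (fun i : Fin n => (i : ℕ) < #J), s i ∣ ∏ j ∈ J, T j j := by
  set e := J.orderEmbOfFin rfl
  have hTe : (T.submatrix e e).IsUpperTriangular := fun _ _ hij => hT (e.strictMono hij)
  have hminor : (T.submatrix e e).det = ∏ j ∈ J, T j j := by
    rw [det_of_isUpperTriangular hTe]
    conv_rhs => rw [← map_orderEmbOfFin_univ J rfl, prod_map]
    rfl
  rw [← hminor, hTs]
  exact prod_filter_lt_dvd_det_submatrix hs A B e e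

end Matrix

section UnimodEquiv

variable {F : Type*} [Field F] {n : ℕ} {P Q : Matrix (Fin n) (Fin n) F[X]}

theorem UnimodEquiv.exists_eq_mul_mul (h : UnimodEquiv P Q) :
    ∃ A B : Matrix (Fin n) (Fin n) F[X], P = A * Q * B := by
  obtain ⟨U, V, hU, hV, rfl⟩ := h
  refine ⟨U⁻¹, V⁻¹, ?_⟩
  rw [← Matrix.mul_assoc, ← Matrix.mul_assoc, nonsing_inv_mul _ hU, Matrix.one_mul,
    Matrix.mul_assoc, mul_nonsing_inv _ hV, Matrix.mul_one]

theorem UnimodEquiv.associated_det (h : UnimodEquiv P Q) : Associated P.det Q.det := by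
  obtain ⟨U, V, hU, hV, rfl⟩ := h
  rw [det_mul, det_mul, mul_right_comm]
  exact associated_unit_mul_right _ _ (hU.mul hV)

end UnimodEquiv

theorem majorizesInt_of_monotone {n : ℕ} {x y : Fin n → ℤ} (hx : Monotone x)
    (hsum : ∑ i, x i = ∑ i, y i)
    (h : ∀ J : Finset (Fin n), ∑ i ∈ univ.filter (fun i : Fin n => (i : ℕ) < #J), x i
      ≤ ∑ j ∈ J, y j) :
    MajorizesInt x y := by
  set τ := Fin.revPerm.trans (Tuple.sort y)
  refine ⟨Fin.revPerm, τ, fun i j hij => hx (Fin.rev_le_rev.mpr hij),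
    fun i j hij => Tuple.monotone_sort y (Fin.rev_le_rev.mpr hij), fun ℓ => ?_, hsum⟩
  set A := univ.filter (fun i : Fin n => (i : ℕ) < ℓ)
  set J := Aᶜ.map τ.toEmbedding
  have hJ : #J = n - min n ℓ := by
    rw [card_map, card_compl, Fintype.card_fin, Fin.card_filter_val_lt]
  have hrev : Aᶜ.map Fin.revPerm.toEmbedding = univ.filter (fun i : Fin n => (i : ℕ) < #J) := by
    ext i
    simp only [A, compl_filter, not_lt, mem_map_equiv, Fin.revPerm_symm, Fin.revPerm_apply,
      mem_filter, mem_univ, Fin.val_rev, true_and, hJ]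
    omega
  -- The `n - ℓ` smallest entries of `x` are its first ones, so compare the complements of `A`.
  have hcompl : ∑ i ∈ Aᶜ, x (Fin.revPerm i) ≤ ∑ i ∈ Aᶜ, y (τ i) := by
    have hJle := h J
    rwa [← hrev, sum_map, sum_map] at hJle
  have hxA := sum_add_sum_compl A (fun i => x (Fin.revPerm i))
  have hyA := sum_add_sum_compl A (fun i => y (τ i))
  rw [Equiv.sum_comp] at hxA hyA
  linarith

theorem statement_17_general {F : Type*} [Field F] {n : ℕ}
    (T : Matrix (Fin n) (Fin n) F[X])
    (hreg : T.det ≠ 0)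
    (hupper : ∀ i j : Fin n, j < i → T i j = 0)
    (s : Fin n → F[X])
    (hchain : ∀ (i : Fin n) (h : (i : ℕ) + 1 < n), s i ∣ s ⟨(i : ℕ) + 1, h⟩)
    (hequiv : UnimodEquiv T (Matrix.diagonal s))
    (S : Set F[X]) :
    MajorizesInt (fun i => (countIn S (s i) : ℤ)) (fun i => (countIn S (T i i) : ℤ)) := by
  have hT : T.IsUpperTriangular := fun i j hij => hupper i j hij
  have hdet : Associated (∏ i, T i i) (∏ i, s i) := by
    simpa [det_of_isUpperTriangular hT] using hequiv.associated_det
  rw [det_of_isUpperTriangular hT] at hreg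
  have hT0 : ∀ i, T i i ≠ 0 := fun i => prod_ne_zero_iff.mp hreg i (mem_univ i)
  have hs0 : ∀ i, s i ≠ 0 := fun i =>
    prod_ne_zero_iff.mp (hdet.ne_zero_iff.mp hreg) i (mem_univ i)
  have hs : ∀ j k : Fin n, j ≤ k → s j ∣ s k := fun _ _ => dvd_of_le_of_forall_dvd_succ hchain
  obtain ⟨A, B, hTs⟩ := hequiv.exists_eq_mul_mul
  refine majorizesInt_of_monotone
    (fun j k hjk => by exact_mod_cast countIn_le_of_dvd S (hs0 k) (hs j k hjk))
    ?_ fun J => ?_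
  · have htotal := hdet.countIn_eq S
    rw [countIn_prod S _ fun i _ => hT0 i, countIn_prod S _ fun i _ => hs0 i] at htotal
    exact_mod_cast htotal.symm
  · have hbound := countIn_le_of_dvd S (prod_ne_zero_iff.mpr fun j _ => hT0 j)
      (prod_filter_lt_card_dvd_prod_diag hs hT hTs J)
    rw [countIn_prod S _ fun i _ => hs0 i, countIn_prod S _ fun j _ => hT0 j] at hbound
    exact_mod_cast hbound

theorem statement_17 {F : Type*} [Field F] {n : ℕ}
    (T : Matrix (Fin n) (Fin n) F[X])
    (hreg : T.det ≠ 0)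
    (hupper : ∀ i j : Fin n, j < i → T i j = 0)
    (s : Fin n → F[X]) (hmonic : ∀ i, (s i).Monic)
    (hchain : ∀ (i : Fin n) (h : (i : ℕ) + 1 < n), s i ∣ s ⟨(i : ℕ) + 1, h⟩)
    (hequiv : UnimodEquiv T (Matrix.diagonal s))
    (S : Set F[X]) (hS : ∀ q ∈ S, q.Monic ∧ Irreducible q) :
    MajorizesInt (fun i => (countIn S (s i) : ℤ)) (fun i => (countIn S (T i i) : ℤ)) :=
  statement_17_general T hreg hupper s hchain hequiv S
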